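/- Let X_1,…,X_n be independent with X ~ ELS(λ1_n, θ, α1_n; F_b) where θ = (θ_1,…,θ_n) ∈ D_+ (or E_+), and let Y_1,…,Y_n be i.i.d. with Y ~ ELS(λ1_n, θ°1_n, α1_n; F_b) for a common scalar scale θ° > 0 (same location λ and shape α for both samples). If w ↦ w²·r̃_b(w) is increasing in w > 0 and n·θ° ≥ Σ_{i=1}^n θ_i, then X_{n−1:n} ≤_st Y_{n−1:n}. -/

import Mathlib

open Finset

/-- Reversed hazard rate of the baseline distribution: `f_b / F_b`. -/
noncomputable def rtilde (Fb fb : ℝ → ℝ) : ℝ → ℝ := fun w => fb w / Fb w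

/-- Hazard rate of the baseline distribution: `f_b / (1 - F_b)`. -/
noncomputable def hrate (Fb fb : ℝ → ℝ) : ℝ → ℝ := fun w => fb w / (1 - Fb w)

/-- CDF of the exponentiated location-scale model `ELS(lam, th, al; F_b)`. -/
noncomputable def elsCDF (Fb : ℝ → ℝ) (lam th al : ℝ) : ℝ → ℝ :=
  fun x => Fb ((x - lam) / th) ^ al

/-- CDF of the second-largest order statistic of `n` independent random
variables with CDFs `F 0, …, F (n-1)`. -/
noncomputable def secondMaxCDF (n : ℕ) (F : Fin n → ℝ → ℝ) : ℝ → ℝ := fun x =>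
  (∑ l : Fin n, ∏ k ∈ Finset.univ.erase l, F k x) -
    ((n : ℝ) - 1) * ∏ k : Fin n, F k x

/-- CDF of the second-largest order statistic of `n` dependent random variables
with marginal CDFs `F i`, coupled by the Archimedean copula with generator `ψ`
(and inverse `φ`). -/
noncomputable def secondMaxCDFdep (n : ℕ) (ψ φ : ℝ → ℝ) (F : Fin n → ℝ → ℝ) : ℝ → ℝ := fun x =>
  (∑ l : Fin n, ψ (∑ k ∈ Finset.univ.erase l, φ (F k x))) -
    ((n : ℝ) - 1) * ψ (∑ k : Fin n, φ (F k x))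

/-- Reversed hazard rate of a CDF `F`: `F' / F`. -/
noncomputable def rhr (F : ℝ → ℝ) : ℝ → ℝ := fun x => deriv F x / F x

/-- Sum of the first `k` coordinates of a vector (partial sum from below). -/
def psum {n : ℕ} (x : Fin n → ℝ) (k : ℕ) : ℝ :=
  ∑ i ∈ Finset.univ.filter (fun i : Fin n => (i : ℕ) < k), x i

/-- Sum of the last `k` coordinates of a vector (partial sum from above). -/
def ssum {n : ℕ} (x : Fin n → ℝ) (k : ℕ) : ℝ :=
  ∑ i ∈ Finset.univ.filter (fun i : Fin n => n - k ≤ (i : ℕ)), x i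

/-- `E₊`: vectors with positive coordinates arranged in ascending order. -/
def EPlus {n : ℕ} (x : Fin n → ℝ) : Prop := (∀ i, 0 < x i) ∧ Monotone x

/-- `D₊`: vectors with positive coordinates arranged in descending order. -/
def DPlus {n : ℕ} (x : Fin n → ℝ) : Prop := (∀ i, 0 < x i) ∧ Antitone x

/-- `ψ` is an `n`-monotone Archimedean copula generator with right-continuous
inverse `φ`. -/
structure IsArchGen (n : ℕ) (ψ φ : ℝ → ℝ) : Prop where
  cont : Continuous ψ
  one : ψ 0 = 1
  anti : StrictAntiOn ψ (Set.Ici 0)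
  tend : Filter.Tendsto ψ Filter.atTop (nhds 0)
  range : ∀ x ≥ (0:ℝ), ψ x ∈ Set.Icc (0:ℝ) 1
  dm_sign : ∀ i ≤ n - 2, ∀ x ≥ (0:ℝ), 0 ≤ (-1:ℝ) ^ i * iteratedDeriv i ψ x
  dm_anti : AntitoneOn (fun x => (-1:ℝ) ^ (n - 2) * iteratedDeriv (n - 2) ψ x) (Set.Ici 0)
  dm_convex : ConvexOn ℝ (Set.Ici 0) (fun x => (-1:ℝ) ^ (n - 2) * iteratedDeriv (n - 2) ψ x)
  inv_left : ∀ x ≥ (0:ℝ), φ (ψ x) = x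
  inv_right : ∀ v ∈ Set.Ioc (0:ℝ) 1, ψ (φ v) = v

/-! Deform the scales linearly, `tₖ(s) = θ₀ + s (θₖ - θ₀)` for `s ∈ [0, 1]`, and follow the CDF of
the second-largest order statistic at `x` along this path. Its derivative is `∑ₖ (θₖ - θ₀) bₖ(s)`
with every `bₖ ≤ 0`, and `bₖ` is larger where `θₖ` is larger because `w ↦ w² r̃_b(w)` is
increasing; since `∑ₖ (θₖ - θ₀) ≤ 0`, Chebyshev's sum inequality makes the derivative nonnegative.
The derivative can fail to exist only where `F_b ^ α` is not differentiable at `(x - λ) / tₖ(s)`,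
which happens at most at the largest zero of `F_b`, so only finitely many points of the path are
exceptional. -/

/-- The partial derivative `∂/∂pᵢ` of `p ↦ ∑ₗ ∏_{k ≠ l} pₖ - (n - 1) ∏ₖ pₖ`, the polynomial in the
marginal CDFs that `secondMaxCDF` evaluates. -/
noncomputable def secondMaxPartial {n : ℕ} (p : Fin n → ℝ) (i : Fin n) : ℝ :=
  (∑ l ∈ univ.erase i, ∏ j ∈ (univ.erase l).erase i, p j) -
    ((n : ℝ) - 1) * ∏ j ∈ univ.erase i, p j

lemma secondMaxCDF_congr {n : ℕ} {F G : Fin n → ℝ → ℝ} {x y : ℝ} (h : ∀ k, F k x = G k y) :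
    secondMaxCDF n F x = secondMaxCDF n G y := by
  simp only [secondMaxCDF, h]

lemma cast_card_univ_erase {n : ℕ} (i : Fin n) :
    ((univ.erase i).card : ℝ) = (n : ℝ) - 1 := by
  rw [card_erase_of_mem (mem_univ i), card_univ, Fintype.card_fin, Nat.cast_pred i.pos]

lemma secondMaxPartial_nonneg {n : ℕ} {p : Fin n → ℝ} (h0 : ∀ k, 0 ≤ p k) (h1 : ∀ k, p k ≤ 1)
    (i : Fin n) : 0 ≤ secondMaxPartial p i := by
  rw [secondMaxPartial, ← cast_card_univ_erase i, ← nsmul_eq_mul, ← sum_const,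
    ← sum_sub_distrib]
  refine sum_nonneg fun l hl => sub_nonneg.2 ?_
  rw [erase_right_comm, ← mul_prod_erase _ p (mem_erase.2 ⟨(mem_erase.1 hl).1, mem_univ l⟩)]
  exact mul_le_of_le_one_left (prod_nonneg fun j _ => h0 j) (h1 l)

lemma mul_secondMaxPartial {n : ℕ} (p : Fin n → ℝ) (i : Fin n) :
    p i * secondMaxPartial p i =
      (∑ l ∈ univ.erase i, ∏ j ∈ univ.erase l, p j) - ((n : ℝ) - 1) * ∏ j, p j := by
  rw [secondMaxPartial, mul_sub, mul_sum, mul_left_comm, mul_prod_erase _ _ (mem_univ i)]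
  congr 1
  refine sum_congr rfl fun l hl => mul_prod_erase _ _ ?_
  exact mem_erase.2 ⟨Ne.symm (mem_erase.1 hl).1, mem_univ i⟩

/-- `pᵢ ∂ᵢP(p) = P(p) - ∏_{k ≠ i} pₖ`, which grows with `pᵢ` when the other coordinates are
fixed. -/
lemma mul_secondMaxPartial_le_of_le {n : ℕ} {p : Fin n → ℝ} (h0 : ∀ k, 0 ≤ p k) {i j : Fin n}
    (hij : p j ≤ p i) : p j * secondMaxPartial p j ≤ p i * secondMaxPartial p i := by
  rcases eq_or_ne i j with rfl | hne
  · exact le_rfl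
  rw [mul_secondMaxPartial, mul_secondMaxPartial, sum_erase_eq_sub (mem_univ j),
    sum_erase_eq_sub (mem_univ i)]
  gcongr _ - ?_ - _
  rw [← mul_prod_erase _ p (mem_erase.2 ⟨Ne.symm hne, mem_univ j⟩),
    ← mul_prod_erase _ p (mem_erase.2 ⟨hne, mem_univ i⟩), erase_right_comm]
  exact mul_le_mul_of_nonneg_right hij (prod_nonneg fun k _ => h0 k)

lemma hasDerivAt_secondMaxCDF {n : ℕ} {F : Fin n → ℝ → ℝ} {F' : Fin n → ℝ} {x : ℝ}
    (hF : ∀ k, HasDerivAt (F k) (F' k) x) :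
    HasDerivAt (secondMaxCDF n F) (∑ k, F' k * secondMaxPartial (fun j => F j x) k) x := by
  have hprod (u : Finset (Fin n)) : HasDerivAt (fun y => ∏ k ∈ u, F k y)
      (∑ k ∈ u, (∏ j ∈ u.erase k, F j x) * F' k) x := by
    simpa only [smul_eq_mul] using HasDerivAt.fun_finsetProd fun k _ => hF k
  refine ((HasDerivAt.fun_sum (u := univ) fun l _ => hprod (univ.erase l)).sub
    ((hprod univ).const_mul ((n : ℝ) - 1))).congr_deriv ?_
  simp_rw [secondMaxPartial, mul_sub, mul_sum, sum_sub_distrib]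
  congr 1
  · simp_rw [sum_erase_eq_sub (mem_univ _), sum_sub_distrib]
    rw [sum_comm]
    simp_rw [mul_comm (F' _)]
  · simp_rw [mul_left_comm (F' _), mul_comm (F' _)]

lemma continuousOn_secondMaxCDF {n : ℕ} {F : Fin n → ℝ → ℝ} {s : Set ℝ}
    (hF : ∀ k, ContinuousOn (F k) s) : ContinuousOn (secondMaxCDF n F) s :=
  (continuousOn_finsetSum _ fun _ _ => continuousOn_finsetProd _ fun k _ => hF k).sub
    (continuousOn_const.mul (continuousOn_finsetProd _ fun k _ => hF k))

lemma sum_mul_nonneg_of_monovary {ι : Type*} [Fintype ι] {a b : ι → ℝ} (hab : Monovary a b)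
    (ha : ∑ i, a i ≤ 0) (hb : ∀ i, b i ≤ 0) : 0 ≤ ∑ i, a i * b i := by
  cases isEmpty_or_nonempty ι
  · simp
  refine nonneg_of_mul_nonneg_right ?_ (Nat.cast_pos.2 (Fintype.card_pos (α := ι)))
  exact (mul_nonneg_of_nonpos_of_nonpos ha (sum_nonpos fun i _ => hb i)).trans
    hab.sum_mul_sum_le_card_mul_sum

lemma le_of_hasDerivAt_nonneg_off_finite {f f' : ℝ → ℝ} {a b : ℝ} {B : Set ℝ} (hB : B.Finite)
    (hab : a ≤ b) (hf : ContinuousOn f (Set.Icc a b))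
    (hf' : ∀ x ∈ Set.Ioo a b, x ∉ B → HasDerivAt f (f' x) x ∧ 0 ≤ f' x) : f a ≤ f b := by
  lift B to Finset ℝ using hB
  induction B using Finset.strongInduction generalizing a b with
  | H B ih =>
  by_cases hB : ∃ c ∈ B, c ∈ Set.Ioo a b
  · obtain ⟨c, hcB, hc⟩ := hB
    have hsub := Finset.erase_ssubset hcB
    have hac : f a ≤ f c := ih _ hsub hc.1.le (hf.mono (Set.Icc_subset_Icc le_rfl hc.2.le))
      fun y hy hyB => hf' y ⟨hy.1, hy.2.trans hc.2⟩ fun h => hyB (mem_erase.2 ⟨hy.2.ne, h⟩)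
    have hcb : f c ≤ f b := ih _ hsub hc.2.le (hf.mono (Set.Icc_subset_Icc hc.1.le le_rfl))
      fun y hy hyB => hf' y ⟨hc.1.trans hy.1, hy.2⟩ fun h => hyB (mem_erase.2 ⟨hy.1.ne', h⟩)
    exact hac.trans hcb
  · push Not at hB
    have hmono : MonotoneOn f (Set.Icc a b) := by
      refine monotoneOn_of_hasDerivWithinAt_nonneg (f' := f') (convex_Icc a b) hf (fun y hy => ?_)
        fun y hy => ?_ <;> rw [interior_Icc] at hy
      · exact (hf' y hy fun h => hB y h hy).1.hasDerivWithinAt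
      · exact (hf' y hy fun h => hB y h hy).2
    exact hmono (Set.left_mem_Icc.2 hab) (Set.right_mem_Icc.2 hab) hab

section Baseline

variable {Fb fb : ℝ → ℝ} {α : ℝ}

lemma hasDerivAt_rpow_of_ne_zero {w : ℝ} (hFb : HasDerivAt Fb (fb w) w) (hw : Fb w ≠ 0) :
    HasDerivAt (fun u => Fb u ^ α) (α * rtilde Fb fb w * Fb w ^ α) w := by
  convert hFb.rpow_const (p := α) (Or.inl hw) using 1
  rw [rtilde, Real.rpow_sub_one hw]
  field_simp

/-- `Fb ^ α` is locally constant left of a zero of `Fb`, and there `rtilde Fb fb = fb / 0 = 0`. -/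
lemma hasDerivAt_rpow_of_lt_of_eq_zero (hmono : Monotone Fb) (hnonneg : ∀ u, 0 ≤ Fb u)
    {w v : ℝ} (hwv : w < v) (hv : Fb v = 0) :
    HasDerivAt (fun u => Fb u ^ α) (α * rtilde Fb fb w * Fb w ^ α) w := by
  have hzero : ∀ u ≤ v, Fb u = 0 := fun u hu => le_antisymm (hv ▸ hmono hu) (hnonneg u)
  rw [rtilde, hzero w hwv.le, div_zero, mul_zero, zero_mul]
  refine (hasDerivAt_const w ((0 : ℝ) ^ α)).congr_of_eventuallyEq ?_
  filter_upwards [Iio_mem_nhds hwv] with u hu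
  rw [hzero u hu.le]

lemma subsingleton_not_hasDerivAt_rpow (hmono : Monotone Fb) (hnonneg : ∀ u, 0 ≤ Fb u)
    (hderiv : ∀ u, HasDerivAt Fb (fb u) u) :
    {w | ¬HasDerivAt (fun u => Fb u ^ α) (α * rtilde Fb fb w * Fb w ^ α) w}.Subsingleton := by
  have hzero (w : ℝ) (hw : ¬HasDerivAt (fun u => Fb u ^ α) (α * rtilde Fb fb w * Fb w ^ α) w) :
      Fb w = 0 :=
    by_contra fun h => hw (hasDerivAt_rpow_of_ne_zero (hderiv w) h)
  intro w₁ h₁ w₂ h₂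
  by_contra hne
  rcases lt_or_gt_of_ne hne with h | h
  · exact h₁ (hasDerivAt_rpow_of_lt_of_eq_zero hmono hnonneg h (hzero w₂ h₂))
  · exact h₂ (hasDerivAt_rpow_of_lt_of_eq_zero hmono hnonneg h (hzero w₁ h₁))

noncomputable def elsScaleDeriv (Fb fb : ℝ → ℝ) (lam α x t : ℝ) : ℝ :=
  -(α / (x - lam)) * (((x - lam) / t) ^ 2 * rtilde Fb fb ((x - lam) / t)) * elsCDF Fb lam t α x

lemma hasDerivAt_elsCDF_scale {lam x t : ℝ} (hx : x ≠ lam) (ht : t ≠ 0)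
    (hw : HasDerivAt (fun u => Fb u ^ α)
      (α * rtilde Fb fb ((x - lam) / t) * Fb ((x - lam) / t) ^ α) ((x - lam) / t)) :
    HasDerivAt (fun t => elsCDF Fb lam t α x) (elsScaleDeriv Fb fb lam α x t) t := by
  have hc : x - lam ≠ 0 := sub_ne_zero.2 hx
  refine (hw.comp t ((hasDerivAt_const t (x - lam)).div (hasDerivAt_id t) ht)).congr_deriv ?_
  simp only [elsScaleDeriv, elsCDF]
  field_simp
  ring

lemma finite_not_hasDerivAt_elsCDF_scale (hmono : Monotone Fb) (hnonneg : ∀ u, 0 ≤ Fb u)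
    (hderiv : ∀ u, HasDerivAt Fb (fb u) u) {lam x : ℝ} (hx : x ≠ lam) :
    {t | ¬HasDerivAt (fun t => elsCDF Fb lam t α x) (elsScaleDeriv Fb fb lam α x t) t}.Finite := by
  have hinj : Function.Injective fun t : ℝ => (x - lam) / t := fun t t' h =>
    inv_injective (mul_left_cancel₀ (sub_ne_zero.2 hx) h)
  refine ((Set.finite_singleton 0).union ((subsingleton_not_hasDerivAt_rpow (α := α) hmono hnonneg
    hderiv).preimage hinj).finite).subset fun t ht => ?_
  by_cases ht0 : t = 0
  · exact Or.inl ht0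
  · exact Or.inr fun hw => ht (hasDerivAt_elsCDF_scale hx ht0 hw)

lemma finite_not_hasDerivAt_elsCDF_affine_scale (hmono : Monotone Fb) (hnonneg : ∀ u, 0 ≤ Fb u)
    (hderiv : ∀ u, HasDerivAt Fb (fb u) u) {lam x : ℝ} (hx : x ≠ lam) (a d : ℝ) :
    {s | ¬HasDerivAt (fun s => elsCDF Fb lam (a + s * d) α x)
      (d * elsScaleDeriv Fb fb lam α x (a + s * d)) s}.Finite := by
  rcases eq_or_ne d 0 with rfl | hd
  · simp [hasDerivAt_const]
  refine ((finite_not_hasDerivAt_elsCDF_scale (α := α) hmono hnonneg hderiv hx).preimage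
    ((add_right_injective a).comp (mul_left_injective₀ hd)).injOn).subset fun s hs ht => hs ?_
  exact (ht.comp s (((hasDerivAt_id s).mul_const d).const_add a)).congr_deriv (by
    simp only [Function.comp_apply]
    ring)

lemma elsScaleDeriv_nonpos {lam x : ℝ} (hx : lam < x) (hα : 0 ≤ α) (hnonneg : ∀ u, 0 ≤ Fb u)
    (hfb : ∀ u, 0 ≤ fb u) (t : ℝ) : elsScaleDeriv Fb fb lam α x t ≤ 0 := by
  have hc : 0 < x - lam := sub_pos.2 hx
  refine mul_nonpos_of_nonpos_of_nonneg (mul_nonpos_of_nonpos_of_nonneg ?_ ?_)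
    (Real.rpow_nonneg (hnonneg _) α)
  · exact neg_nonpos.2 (div_nonneg hα hc.le)
  · exact mul_nonneg (sq_nonneg _) (div_nonneg (hfb _) (hnonneg _))

/-- A larger scale gives a smaller (more negative) product, because both
`w ↦ w ^ 2 * rtilde Fb fb w` and `pᵢ ∂ᵢP(p)` grow with `w = (x - lam) / t`. -/
lemma elsScaleDeriv_mul_secondMaxPartial_le {n : ℕ} {lam x : ℝ} (hx : lam < x) (hα : 0 ≤ α)
    (hmono : Monotone Fb) (hrange : ∀ u, Fb u ∈ Set.Icc (0 : ℝ) 1) (hfb : ∀ u, 0 ≤ fb u)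
    (hinc : MonotoneOn (fun w => w ^ 2 * rtilde Fb fb w) (Set.Ioi 0))
    {t : Fin n → ℝ} (ht : ∀ k, 0 < t k) {i j : Fin n} (hij : t j ≤ t i) :
    elsScaleDeriv Fb fb lam α x (t j) * secondMaxPartial (fun k => elsCDF Fb lam (t k) α x) j ≤
      elsScaleDeriv Fb fb lam α x (t i) *
        secondMaxPartial (fun k => elsCDF Fb lam (t k) α x) i := by
  set p := fun k => elsCDF Fb lam (t k) α x
  have hc : 0 < x - lam := sub_pos.2 hx
  have hp0 (k : Fin n) : 0 ≤ p k := Real.rpow_nonneg (hrange _).1 α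
  have hp1 (k : Fin n) : p k ≤ 1 := Real.rpow_le_one (hrange _).1 (hrange _).2 hα
  have hw : (x - lam) / t i ≤ (x - lam) / t j := div_le_div_of_nonneg_left hc.le (ht j) hij
  have hφ := hinc (div_pos hc (ht i)) (div_pos hc (ht j)) hw
  have hφ0 : 0 ≤ ((x - lam) / t i) ^ 2 * rtilde Fb fb ((x - lam) / t i) :=
    mul_nonneg (sq_nonneg _) (div_nonneg (hfb _) (hrange _).1)
  have hpH : p i * secondMaxPartial p i ≤ p j * secondMaxPartial p j :=
    mul_secondMaxPartial_le_of_le hp0 (Real.rpow_le_rpow (hrange _).1 (hmono hw) hα)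
  calc elsScaleDeriv Fb fb lam α x (t j) * secondMaxPartial p j
      = -(α / (x - lam)) * ((((x - lam) / t j) ^ 2 * rtilde Fb fb ((x - lam) / t j)) *
          (p j * secondMaxPartial p j)) := by simp only [elsScaleDeriv, p]; ring
    _ ≤ -(α / (x - lam)) * ((((x - lam) / t i) ^ 2 * rtilde Fb fb ((x - lam) / t i)) *
          (p i * secondMaxPartial p i)) := by
        refine mul_le_mul_of_nonpos_left ?_ (neg_nonpos.2 (div_nonneg hα hc.le))
        exact mul_le_mul hφ hpH (mul_nonneg (hp0 i) (secondMaxPartial_nonneg hp0 hp1 i))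
          (hφ0.trans hφ)
    _ = elsScaleDeriv Fb fb lam α x (t i) * secondMaxPartial p i := by
        simp only [elsScaleDeriv, p]; ring

lemma sum_mul_elsScaleDeriv_mul_secondMaxPartial_nonneg {n : ℕ} {lam x : ℝ} (hx : lam < x)
    (hα : 0 ≤ α) (hmono : Monotone Fb) (hrange : ∀ u, Fb u ∈ Set.Icc (0 : ℝ) 1)
    (hfb : ∀ u, 0 ≤ fb u) (hinc : MonotoneOn (fun w => w ^ 2 * rtilde Fb fb w) (Set.Ioi 0))
    {d t : Fin n → ℝ} (ht : ∀ k, 0 < t k) (hdt : ∀ i j, d j < d i → t j ≤ t i)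
    (hd : ∑ k, d k ≤ 0) :
    0 ≤ ∑ k, d k * elsScaleDeriv Fb fb lam α x (t k) *
      secondMaxPartial (fun j => elsCDF Fb lam (t j) α x) k := by
  have hp0 (k : Fin n) : 0 ≤ elsCDF Fb lam (t k) α x := Real.rpow_nonneg (hrange _).1 α
  have hp1 (k : Fin n) : elsCDF Fb lam (t k) α x ≤ 1 :=
    Real.rpow_le_one (hrange _).1 (hrange _).2 hα
  simp_rw [mul_assoc]
  refine sum_mul_nonneg_of_monovary (fun i j hb => ?_) hd fun k =>
    mul_nonpos_of_nonpos_of_nonneg (elsScaleDeriv_nonpos hx hα (fun u => (hrange u).1) hfb _)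
      (secondMaxPartial_nonneg hp0 hp1 k)
  by_contra hji
  exact hb.not_ge (elsScaleDeriv_mul_secondMaxPartial_le hx hα hmono hrange hfb hinc ht
    (hdt i j (not_le.1 hji)))

end Baseline

lemma continuousAt_elsCDF_scale {Fb : ℝ → ℝ} (hFb : Continuous Fb) {lam α x t : ℝ} (hα : 0 ≤ α)
    (ht : t ≠ 0) : ContinuousAt (fun t => elsCDF Fb lam t α x) t :=
  ((hFb.continuousAt).comp (continuousAt_const.div continuousAt_id ht)).rpow_const (Or.inr hα)

theorem second_largest_st_scale_mean_bound_general
    (n : ℕ)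
    (Fb fb : ℝ → ℝ)
    (hFb_mono : Monotone Fb)
    (hFb_range : ∀ x, Fb x ∈ Set.Icc (0:ℝ) 1)
    (hFb_deriv : ∀ x, HasDerivAt Fb (fb x) x)
    (hfb_nonneg : ∀ x, 0 ≤ fb x)
    (lam α θ₀ : ℝ) (hα : 0 < α) (hθ₀ : 0 < θ₀)
    (θ : Fin n → ℝ)
    (horder : DPlus θ ∨ EPlus θ)
    (hinc : MonotoneOn (fun w => w ^ 2 * rtilde Fb fb w) (Set.Ioi 0))
    (hsum : (n : ℝ) * θ₀ ≥ ∑ i, θ i) :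
    ∀ x, lam < x →
      secondMaxCDF n (fun _ => elsCDF Fb lam θ₀ α) x ≤
        secondMaxCDF n (fun i => elsCDF Fb lam (θ i) α) x := by
  intro x hx
  have hθ : ∀ k, 0 < θ k := horder.elim (·.1) (·.1)
  have hFb_cont : Continuous Fb := continuous_iff_continuousAt.2 fun u => (hFb_deriv u).continuousAt
  set T : Fin n → ℝ → ℝ := fun k s => θ₀ + s * (θ k - θ₀)
  have hT (k : Fin n) (s : ℝ) (hs : s ∈ Set.Icc (0 : ℝ) 1) : 0 < T k s :=
    (convex_Ioi (0 : ℝ)).add_smul_sub_mem hθ₀ (hθ k) hs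
  have hd : ∑ k, (θ k - θ₀) ≤ 0 := by
    rw [sum_sub_distrib, sum_const, card_univ, Fintype.card_fin, nsmul_eq_mul]
    linarith
  set B := ⋃ k, {s | ¬HasDerivAt (fun s => elsCDF Fb lam (T k s) α x)
      ((θ k - θ₀) * elsScaleDeriv Fb fb lam α x (T k s)) s}
  have hB : B.Finite := Set.finite_iUnion fun k => finite_not_hasDerivAt_elsCDF_affine_scale
    hFb_mono (fun u => (hFb_range u).1) hFb_deriv hx.ne' θ₀ (θ k - θ₀)
  have hmain := le_of_hasDerivAt_nonneg_off_finite
    (f := secondMaxCDF n fun k s => elsCDF Fb lam (T k s) α x) hB zero_le_one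
    (continuousOn_secondMaxCDF fun k s hs => ((continuousAt_elsCDF_scale hFb_cont hα.le
      (hT k s hs).ne').comp (by fun_prop : ContinuousAt (T k) s)).continuousWithinAt)
    fun s hs hsB => by
      simp only [B, Set.mem_iUnion, Set.mem_ofPred_eq, not_exists, not_not] at hsB
      refine ⟨hasDerivAt_secondMaxCDF hsB, sum_mul_elsScaleDeriv_mul_secondMaxPartial_nonneg hx
        hα.le hFb_mono hFb_range hfb_nonneg hinc (fun k => hT k s (Set.Ioo_subset_Icc_self hs))
        (fun i j hij => ?_) hd⟩
      exact add_le_add_right (mul_le_mul_of_nonneg_left hij.le hs.1.le) θ₀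
  convert hmain using 1 <;> exact secondMaxCDF_congr fun k => by simp [T]

theorem second_largest_st_scale_mean_bound
    (n : ℕ) (hn : 2 ≤ n)
    (Fb fb : ℝ → ℝ)
    (hFb_mono : Monotone Fb)
    (hFb_range : ∀ x, Fb x ∈ Set.Icc (0:ℝ) 1)
    (hFb_deriv : ∀ x, HasDerivAt Fb (fb x) x)
    (hfb_nonneg : ∀ x, 0 ≤ fb x)
    (lam α θ₀ : ℝ) (hlam : 0 < lam) (hα : 0 < α) (hθ₀ : 0 < θ₀)
    (θ : Fin n → ℝ)
    (horder : DPlus θ ∨ EPlus θ)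
    (hinc : MonotoneOn (fun w => w ^ 2 * rtilde Fb fb w) (Set.Ioi 0))
    (hsum : (n : ℝ) * θ₀ ≥ ∑ i, θ i) :
    ∀ x, lam < x →
      secondMaxCDF n (fun _ => elsCDF Fb lam θ₀ α) x ≤
        secondMaxCDF n (fun i => elsCDF Fb lam (θ i) α) x :=
  second_largest_st_scale_mean_bound_general n Fb fb hFb_mono hFb_range hFb_deriv hfb_nonneg lam α
    θ₀ hα hθ₀ θ horder hinc hsum
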